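/- (Property 3) Let C be an initial configuration of the BRP in which every stack holds at least k blocks, and let 𝔅³ be the top k layers of C. Suppose (1) the block of minimum label (the target block) does not belong to 𝔅³, and (2) every badly placed block of 𝔅³ has a label strictly greater than the minimum label remaining in stack s after deleting the topmost k−1 blocks of s, for every stack s. Then every feasible move sequence for C contains at least k non-BG relocations of blocks of 𝔅³; that is, f_nonBG(𝔅³) ≥ k. -/

import Mathlib

/-- A configuration of the BRP: each stack holds a list of blocks, bottom to top. -/
abbrev Config (B S : ℕ) := Fin S → List (Fin B)

/-- Every block occurs exactly once among the stacks. -/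
def IsConfig {B S : ℕ} (C : Config B S) : Prop :=
  ∀ b : Fin B, (∑ s : Fin S, (C s).count b) = 1

/-- `a` lies strictly below `b` in stack `s` of `C`. -/
def StrictlyBelow {B S : ℕ} (C : Config B S) (s : Fin S) (a b : Fin B) : Prop :=
  ∃ i j : ℕ, i < j ∧ (C s)[i]? = some a ∧ (C s)[j]? = some b

/-- A block is badly placed if some smaller-labelled block lies below it in its stack. -/
def BadlyPlaced {B S : ℕ} (C : Config B S) (b : Fin B) : Prop :=
  ∃ s a, a < b ∧ StrictlyBelow C s a b

/-- Moves: retrieve the top block of a stack, or relocate the top block of one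
stack onto another stack. -/
inductive Move (S : ℕ) where
  | retrieve (s : Fin S)
  | relocate (src dst : Fin S)

def applyMove {B S : ℕ} (C : Config B S) : Move S → Config B S
  | .retrieve s => Function.update C s (C s).dropLast
  | .relocate src dst =>
    match (C src).getLast? with
    | some b =>
      let C' := Function.update C src (C src).dropLast
      Function.update C' dst (C' dst ++ [b])
    | none => C

def Enabled {B S : ℕ} (C : Config B S) : Move S → Prop
  | .retrieve s => ∃ b, (C s).getLast? = some b ∧ ∀ (s' : Fin S), ∀ b' ∈ C s', b ≤ b'
  | .relocate src dst => src ≠ dst ∧ C src ≠ []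

def play {B S : ℕ} (C : Config B S) : List (Move S) → Config B S
  | [] => C
  | m :: ms => play (applyMove C m) ms

def AllEnabled {B S : ℕ} (C : Config B S) : List (Move S) → Prop
  | [] => True
  | m :: ms => Enabled C m ∧ AllEnabled (applyMove C m) ms

/-- A feasible move sequence: every move is enabled and at the end all blocks
have been retrieved. -/
def Feasible {B S : ℕ} (C : Config B S) (ms : List (Move S)) : Prop :=
  AllEnabled C ms ∧ ∀ s, play C ms s = []

/-- `b` is the block moved by `m` (a relocation) performed in configuration `C`. -/
def MovedBlock {B S : ℕ} (C : Config B S) (m : Move S) (b : Fin B) : Prop :=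
  ∃ src dst, m = .relocate src dst ∧ src ≠ dst ∧ (C src).getLast? = some b

/-- The four types of relocation moves. -/
inductive MType where
  | BB | BG | GB | GG

/-- The relocation `m`, moving block `b` from configuration `C`, has the given type. -/
def MTypeOf {B S : ℕ} (C : Config B S) (m : Move S) (b : Fin B) : MType → Prop
  | .BB => BadlyPlaced C b ∧ BadlyPlaced (applyMove C m) b
  | .BG => BadlyPlaced C b ∧ ¬ BadlyPlaced (applyMove C m) b
  | .GB => ¬ BadlyPlaced C b ∧ BadlyPlaced (applyMove C m) b
  | .GG => ¬ BadlyPlaced C b ∧ ¬ BadlyPlaced (applyMove C m) b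

/-- `m` is a relocation of a block of `𝔅`. -/
def RelocIn {B S : ℕ} (𝔅 : Set (Fin B)) (C : Config B S) (m : Move S) : Prop :=
  ∃ b ∈ 𝔅, MovedBlock C m b

/-- `m` is a relocation of a block of `𝔅` of type `mt`. -/
def RelocTypeIn {B S : ℕ} (mt : MType) (𝔅 : Set (Fin B)) (C : Config B S) (m : Move S) : Prop :=
  ∃ b ∈ 𝔅, MovedBlock C m b ∧ MTypeOf C m b mt

/-- `m` is a non-BG relocation of a block of `𝔅`. -/
def RelocNonBGIn {B S : ℕ} (𝔅 : Set (Fin B)) (C : Config B S) (m : Move S) : Prop :=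
  ∃ b ∈ 𝔅, MovedBlock C m b ∧ ¬ MTypeOf C m b MType.BG

/-- Count the moves of a sequence satisfying `P` (evaluated in the configuration
in which each move is performed). -/
noncomputable def countMoves {B S : ℕ} (P : Config B S → Move S → Prop) :
    Config B S → List (Move S) → ℕ
  | _, [] => 0
  | C, m :: ms =>
    (@ite ℕ (P C m) (Classical.propDecidable _) 1 0) + countMoves P (applyMove C m) ms

/-- Minimum over feasible move sequences of the number of moves satisfying `P`. -/
noncomputable def fMin {B S : ℕ} (C : Config B S) (P : Config B S → Move S → Prop) : ℕ :=
  sInf { n | ∃ ms, Feasible C ms ∧ countMoves P C ms = n }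

/-- `f(𝔅)`: least number of relocations applied to blocks of `𝔅`. -/
noncomputable def fRel {B S : ℕ} (C : Config B S) (𝔅 : Set (Fin B)) : ℕ :=
  fMin C (RelocIn 𝔅)

/-- `f_mt(𝔅)`: least number of type-`mt` relocations applied to blocks of `𝔅`. -/
noncomputable def fTyp {B S : ℕ} (C : Config B S) (mt : MType) (𝔅 : Set (Fin B)) : ℕ :=
  fMin C (RelocTypeIn mt 𝔅)

/-- `f_nonBG(𝔅)`: least number of non-BG relocations applied to blocks of `𝔅`. -/
noncomputable def fNonBG {B S : ℕ} (C : Config B S) (𝔅 : Set (Fin B)) : ℕ :=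
  fMin C (RelocNonBGIn 𝔅)

/-- The top 1st layer: the topmost block of each stack. -/
def TopLayer {B S : ℕ} (C : Config B S) : Set (Fin B) :=
  {b | ∃ s, (C s).getLast? = some b}

/-- The top `k` layers: the topmost `k` blocks of every stack. -/
def TopK {B S : ℕ} (C : Config B S) (k : ℕ) : Set (Fin B) :=
  {b | ∃ s, b ∈ (C s).drop ((C s).length - k)}

/-- The top `j`-th layer: the `j`-th block from the top of every stack. -/
def TopJth {B S : ℕ} (C : Config B S) (j : ℕ) : Set (Fin B) :=
  {b | ∃ s, (C s)[(C s).length - j]? = some b}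

/-- A virtual layer: a set of blocks containing exactly one block from each stack. -/
def VirtualLayer {B S : ℕ} (C : Config B S) (V : Set (Fin B)) : Prop :=
  ∀ s : Fin S, ∃! b : Fin B, b ∈ V ∧ b ∈ C s

/-- `a` lies at or below the `V`-block of stack `s`. -/
def AtOrBelowLayer {B S : ℕ} (C : Config B S) (V : Set (Fin B)) (s : Fin S) (a : Fin B) : Prop :=
  ∃ b j, b ∈ V ∧ (C s)[j]? = some b ∧ a ∈ (C s).take (j + 1)

/-- `V` is a virtual layer satisfying the conditions of Property 5:
(1) in some stack, a block strictly below the `V`-block of that stack has a smaller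
label than every block of `V`; (2) every badly placed block of `V` has a label
strictly greater than the minimum label present in stack `s` after deleting all
blocks strictly above the `V`-block of `s`, for every stack `s`. -/
def P5 {B S : ℕ} (C : Config B S) (V : Set (Fin B)) : Prop :=
  VirtualLayer C V ∧
  (∃ s a b, b ∈ V ∧ StrictlyBelow C s a b ∧ ∀ c ∈ V, a < c) ∧
  (∀ b ∈ V, BadlyPlaced C b → ∀ s : Fin S, ∃ a, AtOrBelowLayer C V s a ∧ a < b)

/-- A pair of virtual layers `V₁` (upper), `V₂` (lower) with shared well-placed
block `bstar` satisfying the conditions of Property 7. -/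
def P7 {B S : ℕ} (C : Config B S) (V₁ V₂ : Set (Fin B)) (bstar : Fin B) : Prop :=
  V₁ ∩ V₂ = {bstar} ∧
  ¬ BadlyPlaced C bstar ∧
  (∀ s : Fin S, bstar ∉ C s →
    ∃ b₁ b₂, b₁ ∈ V₁ ∧ b₂ ∈ V₂ ∧ StrictlyBelow C s b₂ b₁) ∧
  P5 C V₁ ∧ P5 C V₂ ∧
  (∀ s : Fin S, ∃ a, AtOrBelowLayer C V₁ s a ∧ a ≤ bstar) ∧
  (∃ s : Fin S, ∀ a, AtOrBelowLayer C V₁ s a → bstar ≤ a)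

/-- Push blocks one by one onto the indicated stacks. -/
def pushAll {B S : ℕ} (C : Config B S) : List (Fin B × Fin S) → Config B S
  | [] => C
  | p :: rest => pushAll (Function.update C p.2 (C p.2 ++ [p.1])) rest

/-- The blocks lying strictly above position `i` of stack `s`, listed from the
top of the stack downward (the processing order of the experiment). -/
def aboveList {B S : ℕ} (C : Config B S) (s : Fin S) (i : ℕ) : List (Fin B) :=
  ((C s).drop (i + 1)).reverse

/-- The arrangement resulting from the experiment of Property 4: the blocks above
position `i` of stack `s` are relocated exactly once, from the top downward, onto
the stacks listed in `ds`. -/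
def expResult {B S : ℕ} (C : Config B S) (s : Fin S) (i : ℕ) (ds : List (Fin S)) :
    Config B S :=
  pushAll (Function.update C s ((C s).take (i + 1))) ((aboveList C s i).zip ds)

/-- The condition of Property 4 (target block at position `i` of stack `sStar`):
in every experiment, some relocated block ends badly placed. -/
def P4Cond {B S : ℕ} (C : Config B S) (sStar : Fin S) (i : ℕ) : Prop :=
  ∀ ds : List (Fin S), ds.length = (aboveList C sStar i).length →
    (∀ d ∈ ds, d ≠ sStar) →
    ∃ b ∈ aboveList C sStar i, BadlyPlaced (expResult C sStar i ds) b

/-- The set `𝔅⁴`: the blocks above the target block together with, for each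
nonempty stack other than the target's stack, its block of minimum label. -/
def B4Set {B S : ℕ} (C : Config B S) (sStar : Fin S) (i : ℕ) : Set (Fin B) :=
  {b | b ∈ aboveList C sStar i} ∪
  {b | ∃ s, s ≠ sStar ∧ b ∈ C s ∧ ∀ b' ∈ C s, b ≤ b'}

/-- The number of direct blockages: adjacent pairs in a stack whose upper block
has a strictly larger label. -/
def directBlockages {B S : ℕ} (C : Config B S) : ℕ :=
  ∑ s : Fin S, (((C s).zip (C s).tail).filter (fun p => decide (p.1 < p.2))).length

/-- The number of relocations in a move sequence. -/
def relocCount {S : ℕ} (ms : List (Move S)) : ℕ :=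
  (ms.filter (fun m => match m with | Move.relocate _ _ => true | Move.retrieve _ => false)).length

/-- The minimum number of relocations over all feasible move sequences. -/
noncomputable def fAll {B S : ℕ} (C : Config B S) : ℕ :=
  sInf { n | ∃ ms, Feasible C ms ∧ relocCount ms = n }

/-- `g(L)`: `L` plus the minimum number of direct blockages over all partial
plans with exactly `L` relocations. -/
noncomputable def gIter {B S : ℕ} (C : Config B S) (L : ℕ) : ℕ :=
  L + sInf { d | ∃ ms : List (Move S), AllEnabled C ms ∧ relocCount ms = L ∧
      d = directBlockages (play C ms) }


/-!
For `n < k` call layer `n` intact when every stack still carries, at its bottom, all blocks of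
its initial stack except the top `n`; initially all `k` layers are intact. The target `t` lies
below the top `k` layers, so while some layer is intact `t` stays buried, and as `t` is the only
block that may be retrieved, nothing is retrieved and the stacks cannot be empty. Layer `n` is
broken only by moving the `(n + 1)`-th block from the top of a stack dug down exactly to it.
That block lies in `𝔅³`, and the move is not BG: if the block is badly placed, it already was
in `C`, so by condition (2) the intact part of the destination stack holds a smaller block.
Different layers are broken by different moves, which gives `k` non-BG relocations. Distinctness
of the blocks is carried along as nodup-ness of the multiset of all blocks. The bound passes to
the infimum `f_nonBG` because a feasible sequence exists once `S ≥ 2`.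
-/

section Blocks

variable {B S : ℕ}

def blocks (D : Config B S) : Multiset (Fin B) := ∑ s, (D s : Multiset (Fin B))

lemma mem_blocks {D : Config B S} {x : Fin B} : x ∈ blocks D ↔ ∃ s, x ∈ D s := by
  simp [blocks, Multiset.mem_sum]

lemma coe_le_blocks (D : Config B S) (s : Fin S) : (D s : Multiset (Fin B)) ≤ blocks D :=
  Finset.single_le_sum (f := fun u => (D u : Multiset (Fin B))) (fun _ _ => zero_le)
    (Finset.mem_univ s)

lemma blocks_update_add (D : Config B S) (s : Fin S) (l : List (Fin B)) :
    blocks (Function.update D s l) + D s = blocks D + l := by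
  have hcoe : (fun u => ((Function.update D s l u : List (Fin B)) : Multiset (Fin B))) =
      Function.update (fun u => (D u : Multiset (Fin B))) s l :=
    funext (Function.apply_update (fun _ (l : List (Fin B)) => (l : Multiset (Fin B))) D s l)
  simp only [blocks, hcoe, Finset.sum_update_of_mem (Finset.mem_univ s),
    Finset.sum_eq_add_sum_sdiff_singleton_of_mem (Finset.mem_univ s)
      (fun u => (D u : Multiset (Fin B)))]
  abel

lemma IsConfig.blocks_eq_univ {C : Config B S} (hC : IsConfig C) :
    blocks C = (Finset.univ : Finset (Fin B)).val := by
  ext b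
  simp [blocks, Multiset.count_sum', hC b]

lemma eq_of_mem_of_nodup_blocks {D : Config B S} (hD : (blocks D).Nodup) {x : Fin B}
    {s s' : Fin S} (hx : x ∈ D s) (hx' : x ∈ D s') : s = s' := by
  by_contra hne
  have hle : (D s : Multiset (Fin B)) + D s' ≤ blocks D := by
    rw [← Finset.sum_pair (f := fun u => (D u : Multiset (Fin B))) hne]
    exact Finset.sum_le_sum_of_subset (Finset.subset_univ _)
  exact Multiset.disjoint_left.1 (Multiset.nodup_add.1 (Multiset.nodup_of_le hle hD)).2.2
    (Multiset.mem_coe.2 hx) (Multiset.mem_coe.2 hx')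

lemma nodup_of_nodup_blocks {D : Config B S} (hD : (blocks D).Nodup) (s : Fin S) :
    (D s).Nodup :=
  Multiset.coe_nodup.1 (Multiset.nodup_of_le (coe_le_blocks D s) hD)

end Blocks

section Moves

variable {B S : ℕ} {D : Config B S} {src dst : Fin S} {b : Fin B}

lemma applyMove_relocate (hb : (D src).getLast? = some b) :
    applyMove D (.relocate src dst) =
      Function.update (Function.update D src (D src).dropLast) dst
        (Function.update D src (D src).dropLast dst ++ [b]) := by
  simp [applyMove, hb]

lemma applyMove_relocate_src (hne : src ≠ dst) (hb : (D src).getLast? = some b) :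
    applyMove D (.relocate src dst) src = (D src).dropLast := by
  simp [applyMove_relocate hb, hne]

lemma applyMove_relocate_dst (hne : src ≠ dst) (hb : (D src).getLast? = some b) :
    applyMove D (.relocate src dst) dst = D dst ++ [b] := by
  simp [applyMove_relocate hb, hne.symm]

lemma applyMove_relocate_of_ne {e : Fin S} (hsrc : e ≠ src) (hdst : e ≠ dst)
    (hb : (D src).getLast? = some b) : applyMove D (.relocate src dst) e = D e := by
  simp [applyMove_relocate hb, hsrc, hdst]

lemma coe_eq_dropLast_add (hb : (D src).getLast? = some b) :
    (D src : Multiset (Fin B)) = (D src).dropLast + {b} := by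
  obtain ⟨l, hl⟩ := List.getLast?_eq_some_iff.1 hb
  simp [hl, ← Multiset.coe_add]

lemma blocks_update_dropLast (hb : (D src).getLast? = some b) :
    blocks (Function.update D src (D src).dropLast) + {b} = blocks D := by
  have h := blocks_update_add D src (D src).dropLast
  rw [coe_eq_dropLast_add hb, ← add_assoc, add_right_comm] at h
  exact add_right_cancel h

lemma blocks_relocate (hne : src ≠ dst) (hb : (D src).getLast? = some b) :
    blocks (applyMove D (.relocate src dst)) = blocks D := by
  have h := blocks_update_add (Function.update D src (D src).dropLast) dst
    (Function.update D src (D src).dropLast dst ++ [b])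
  rw [← applyMove_relocate hb, Function.update_of_ne hne.symm, ← Multiset.coe_add,
    Multiset.coe_singleton, ← add_assoc, add_right_comm] at h
  rw [add_right_cancel h, blocks_update_dropLast hb]

lemma blocks_retrieve {s : Fin S} (hb : (D s).getLast? = some b) :
    b ::ₘ blocks (applyMove D (.retrieve s)) = blocks D := by
  rw [← Multiset.singleton_add, add_comm]
  exact blocks_update_dropLast hb

end Moves

section Feasibility

variable {B S : ℕ}

lemma feasible_cons {D : Config B S} {m : Move S} {ms : List (Move S)} (hm : Enabled D m)
    (hms : Feasible (applyMove D m) ms) : Feasible D (m :: ms) :=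
  ⟨⟨hm, hms.1⟩, hms.2⟩

/-- Dig out a minimal block by moving the blocks above it elsewhere, then retrieve it. -/
lemma exists_feasible_of_forall_le (hS : 2 ≤ S) {N : ℕ}
    (ih : ∀ D : Config B S, Multiset.card (blocks D) < N → ∃ ms, Feasible D ms)
    {b : Fin B} {s₀ : Fin S} (D : Config B S) (hN : Multiset.card (blocks D) = N)
    (hb : b ∈ D s₀) (hmin : ∀ c ∈ blocks D, b ≤ c) : ∃ ms, Feasible D ms := by
  induction hL : (D s₀).length generalizing D with
  | zero => exact absurd hL (List.length_pos_of_mem hb).ne'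
  | succ L IH =>
    obtain ⟨c, hc⟩ := Option.isSome_iff_exists.1 (List.getLast?_isSome.2 (List.ne_nil_of_mem hb))
    by_cases hcb : c = b
    · subst hcb
      have hen : Enabled D (.retrieve s₀) :=
        ⟨c, hc, fun s' b' hb' => hmin b' (mem_blocks.2 ⟨s', hb'⟩)⟩
      have hcard := congrArg Multiset.card (blocks_retrieve hc)
      rw [Multiset.card_cons] at hcard
      obtain ⟨ms, hms⟩ := ih (applyMove D (.retrieve s₀)) (by omega)
      exact ⟨_, feasible_cons hen hms⟩
    · obtain ⟨s₁, hs₁⟩ := Fintype.exists_ne_of_one_lt_card (by simp; omega) s₀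
      have hblocks := blocks_relocate hs₁.symm hc
      have hb' : b ∈ applyMove D (.relocate s₀ s₁) s₀ := by
        rw [applyMove_relocate_src hs₁.symm hc]
        obtain ⟨l, hl⟩ := List.getLast?_eq_some_iff.1 hc
        rw [hl] at hb ⊢
        simpa [Ne.symm hcb] using hb
      obtain ⟨ms, hms⟩ := IH _ (hblocks ▸ hN) hb' (hblocks ▸ hmin)
        (by rw [applyMove_relocate_src hs₁.symm hc, List.length_dropLast, hL]; rfl)
      exact ⟨_, feasible_cons (m := .relocate s₀ s₁) ⟨hs₁.symm, List.ne_nil_of_mem hb⟩ hms⟩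

lemma exists_feasible (hS : 2 ≤ S) (D : Config B S) : ∃ ms, Feasible D ms := by
  induction hN : Multiset.card (blocks D) using Nat.strong_induction_on generalizing D with
  | _ N ih =>
    by_cases h0 : blocks D = 0
    · refine ⟨[], trivial, fun s => ?_⟩
      have h := coe_le_blocks D s
      rw [h0, Multiset.le_zero, Multiset.coe_eq_zero] at h
      exact h
    · obtain ⟨b, hb, hmin⟩ := Multiset.exists_min_image id h0
      obtain ⟨s₀, hs₀⟩ := mem_blocks.1 hb
      exact exists_feasible_of_forall_le hS (fun D' hD' => ih _ hD' D' rfl) D hN hs₀ hmin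

end Feasibility

lemma List.mem_drop_of_getElem? {α : Type*} {l : List α} {i m : ℕ} {x : α}
    (hx : l[i]? = some x) (hm : m ≤ i) : x ∈ l.drop m :=
  List.mem_of_getElem? (i := i - m) (by rwa [List.getElem?_drop, Nat.add_sub_cancel' hm])

lemma List.IsPrefix.getElem?_eq_some {α : Type*} {l₁ l₂ : List α} (h : l₁ <+: l₂) {i : ℕ}
    {x : α} (hx : l₁[i]? = some x) : l₂[i]? = some x := by
  obtain ⟨r, rfl⟩ := h
  rwa [List.getElem?_append_left (List.getElem?_eq_some_iff.1 hx).1]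

lemma List.mem_drop_of_getLast?_take {α : Type*} {l : List α} {n k : ℕ} {x : α} (hnk : n < k)
    (hx : (l.take (l.length - n)).getLast? = some x) : x ∈ l.drop (l.length - k) := by
  have hpos : 0 < l.length - n := Nat.pos_of_ne_zero fun h => by simp [h] at hx
  rw [List.getLast?_eq_getElem?, List.length_take, min_eq_left (Nat.sub_le _ _),
    List.getElem?_take_of_lt (by omega)] at hx
  exact List.mem_drop_of_getElem? hx (by omega)

lemma List.eq_of_take_length_sub_eq {α : Type*} {l : List α} {m n : ℕ}
    (h : l.take (l.length - m) = l.take (l.length - n)) (hne : l.take (l.length - n) ≠ []) :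
    m = n := by
  have hlen := congrArg List.length h
  have hpos := List.length_pos_iff.2 hne
  simp only [List.length_take] at hlen hpos
  omega

section LowerLayers

variable {B S : ℕ}

def LowerIntact (C D : Config B S) (n : ℕ) : Prop :=
  ∀ s, (C s).take ((C s).length - n) <+: D s

variable {C D : Config B S} {n : ℕ}

lemma lowerIntact_self (C : Config B S) (n : ℕ) : LowerIntact C C n :=
  fun _ => List.take_prefix _ _

lemma LowerIntact.relocate {src dst : Fin S} {b : Fin B} (h : LowerIntact C D n)
    (hne : src ≠ dst) (hb : (D src).getLast? = some b)
    (hsrc : (C src).take ((C src).length - n) ≠ D src) :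
    LowerIntact C (applyMove D (.relocate src dst)) n := by
  intro e
  by_cases he : e = src
  · subst he
    obtain ⟨l, hl⟩ := List.getLast?_eq_some_iff.1 hb
    have h' := h e
    rw [hl] at h' hsrc
    rw [applyMove_relocate_src hne hb, hl, List.dropLast_concat]
    exact (List.prefix_concat_iff.1 h').resolve_left hsrc
  by_cases he' : e = dst
  · subst he'
    rw [applyMove_relocate_dst hne hb]
    exact (h e).trans (List.prefix_append _ _)
  · rw [applyMove_relocate_of_ne he he' hb]
    exact h e

lemma LowerIntact.getElem? (h : LowerIntact C D n) {s : Fin S} {i : ℕ} {x : Fin B}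
    (hx : (C s)[i]? = some x) (hi : i + n < (C s).length) : (D s)[i]? = some x := by
  refine (h s).getElem?_eq_some ?_
  rwa [List.getElem?_take_of_lt (by omega)]

/-- Only the minimum `t` could be retrieved, and it is buried in the intact part of `s₀`. -/
lemma LowerIntact.not_enabled_retrieve (h : LowerIntact C D n) (hD : (blocks D).Nodup)
    {t : Fin B} (ht : ∀ b, t ≤ b) {s₀ : Fin S} {i : ℕ} (hti : (C s₀)[i]? = some t)
    (hi : i + n + 1 < (C s₀).length) (s : Fin S) : ¬ Enabled D (.retrieve s) := by
  rintro ⟨b, hb, hmin⟩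
  have htD := h.getElem? hti (by omega)
  obtain rfl : b = t := le_antisymm (hmin s₀ t (List.mem_of_getElem? htD)) (ht b)
  obtain rfl : s = s₀ :=
    eq_of_mem_of_nodup_blocks hD (List.mem_of_mem_getLast? hb) (List.mem_of_getElem? htD)
  have hlen : (C s).length - n ≤ (D s).length := by
    simpa using (h s).length_le
  rw [List.getLast?_eq_getElem?, ← htD,
    List.getElem?_inj (by omega) (nodup_of_nodup_blocks hD s)] at hb
  omega

end LowerLayers

section Counting

variable {B S : ℕ}

lemma not_mTypeOf_BG_relocate {C D : Config B S} (hD : (blocks D).Nodup) {src dst : Fin S}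
    {b : Fin B} (hne : src ≠ dst) (hb : (D src).getLast? = some b) (hpre : D src <+: C src)
    (hbad : BadlyPlaced C b → ∃ a ∈ D dst, a < b) :
    ¬ MTypeOf D (.relocate src dst) b .BG := by
  rintro ⟨⟨s, a, hab, i, j, hij, hi, hj⟩, hgood⟩
  obtain rfl : s = src :=
    eq_of_mem_of_nodup_blocks hD (List.mem_of_getElem? hj) (List.mem_of_mem_getLast? hb)
  obtain ⟨a', ha', ha'b⟩ :=
    hbad ⟨s, a, hab, i, j, hij, hpre.getElem?_eq_some hi, hpre.getElem?_eq_some hj⟩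
  obtain ⟨i', hi'⟩ := List.mem_iff_getElem?.1 ha'
  refine hgood ⟨dst, a', ha'b, i', (D dst).length, (List.getElem?_eq_some_iff.1 hi').1, ?_, ?_⟩
  · rw [applyMove_relocate_dst hne hb]
    exact (List.prefix_append _ _).getElem?_eq_some hi'
  · simp [applyMove_relocate_dst hne hb]

variable {C D : Config B S} {k : ℕ}

lemma relocNonBGIn_topK_of_take_eq {n : ℕ} (hnk : n < k) (hD : (blocks D).Nodup)
    (hint : LowerIntact C D n) {src dst : Fin S} {b : Fin B} (hne : src ≠ dst)
    (hb : (D src).getLast? = some b) (heq : (C src).take ((C src).length - n) = D src)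
    (hcond : ∀ b ∈ TopK C k, BadlyPlaced C b →
      ∀ s : Fin S, ∃ a ∈ (C s).take ((C s).length - (k - 1)), a < b) :
    RelocNonBGIn (TopK C k) D (.relocate src dst) := by
  have hbtop : b ∈ TopK C k := ⟨src, List.mem_drop_of_getLast?_take hnk (heq ▸ hb)⟩
  refine ⟨b, hbtop, ⟨src, dst, rfl, hne, hb⟩, not_mTypeOf_BG_relocate hD hne hb
    (heq ▸ List.take_prefix _ _) fun hbad => ?_⟩
  obtain ⟨a, ha, hab⟩ := hcond b hbtop hbad dst
  exact ⟨a, ((List.take_prefix_take_left (by omega)).trans (hint dst)).mem ha, hab⟩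

theorem card_le_countMoves_relocNonBGIn {t : Fin B} (ht : ∀ b, t ≤ b) {s₀ : Fin S} {i : ℕ}
    (hti : (C s₀)[i]? = some t) (hi : i + k < (C s₀).length)
    (hcond : ∀ b ∈ TopK C k, BadlyPlaced C b →
      ∀ s : Fin S, ∃ a ∈ (C s).take ((C s).length - (k - 1)), a < b)
    (ms : List (Move S)) (D : Config B S) (J : Finset ℕ) (hJ : J ⊆ Finset.range k)
    (hD : (blocks D).Nodup) (hint : ∀ n ∈ J, LowerIntact C D n) (hen : AllEnabled D ms)
    (hend : ∀ s, play D ms s = []) :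
    J.card ≤ countMoves (RelocNonBGIn (TopK C k)) D ms := by
  induction ms generalizing D J with
  | nil =>
    obtain rfl | ⟨n, hn⟩ := J.eq_empty_or_nonempty
    · simp
    have htD := (hint n hn).getElem? hti (by have := Finset.mem_range.1 (hJ hn); omega)
    have hempty : D s₀ = [] := hend s₀
    simp [hempty] at htD
  | cons m ms ih =>
    obtain rfl | ⟨n, hn⟩ := J.eq_empty_or_nonempty
    · simp
    obtain ⟨hm, hms⟩ := hen
    cases m with
    | retrieve s =>
      exact absurd hm ((hint n hn).not_enabled_retrieve hD ht hti
        (by have := Finset.mem_range.1 (hJ hn); omega) s)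
    | relocate src dst =>
      obtain ⟨hne, hsrc⟩ := hm
      obtain ⟨b, hb⟩ := Option.isSome_iff_exists.1 (List.getLast?_isSome.2 hsrc)
      have hD' : (blocks (applyMove D (.relocate src dst))).Nodup := blocks_relocate hne hb ▸ hD
      by_cases hbreak : ∃ n₀ ∈ J, (C src).take ((C src).length - n₀) = D src
      · obtain ⟨n₀, hn₀, heq⟩ := hbreak
        have hkeep : ∀ n ∈ J.erase n₀, LowerIntact C (applyMove D (.relocate src dst)) n := by
          refine fun n hn => (hint n (Finset.mem_of_mem_erase hn)).relocate hne hb fun h =>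
            Finset.ne_of_mem_erase hn (List.eq_of_take_length_sub_eq (h.trans heq.symm)
              (heq ▸ hsrc))
        have := ih _ _ ((J.erase_subset n₀).trans hJ) hD' hkeep hms hend
        rw [countMoves, if_pos (relocNonBGIn_topK_of_take_eq (Finset.mem_range.1 (hJ hn₀)) hD
          (hint n₀ hn₀) hne hb heq hcond), ← Finset.card_erase_add_one hn₀]
        omega
      · simp only [not_exists, not_and] at hbreak
        have := ih _ J hJ hD' (fun n hn => (hint n hn).relocate hne hb (hbreak n hn)) hms hend
        rw [countMoves]
        omega

end Counting

theorem brp_property3_general {B S : ℕ} (hS : 2 ≤ S)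
    (C : Config B S) (hC : IsConfig C)
    (k : ℕ)
    (t : Fin B) (ht : ∀ b, t ≤ b) (htout : t ∉ TopK C k)
    (hcond : ∀ b ∈ TopK C k, BadlyPlaced C b →
      ∀ s : Fin S, ∃ a ∈ (C s).take ((C s).length - (k - 1)), a < b) :
    (∀ ms, Feasible C ms → k ≤ countMoves (RelocNonBGIn (TopK C k)) C ms) ∧
    k ≤ fNonBG C (TopK C k) := by
  have hblocks := hC.blocks_eq_univ
  obtain ⟨s₀, hs₀⟩ := mem_blocks.1 (hblocks ▸ Finset.mem_univ t : t ∈ blocks C)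
  obtain ⟨i, hti⟩ := List.mem_iff_getElem?.1 hs₀
  have hi : i + k < (C s₀).length := by
    by_contra hi
    exact htout ⟨s₀, List.mem_drop_of_getElem? hti (by omega)⟩
  have hcount : ∀ ms, Feasible C ms → k ≤ countMoves (RelocNonBGIn (TopK C k)) C ms :=
    fun ms hms => by
      simpa using card_le_countMoves_relocNonBGIn ht hti hi hcond ms C (Finset.range k)
        subset_rfl (hblocks ▸ Finset.univ.nodup : (blocks C).Nodup)
        (fun n _ => lowerIntact_self C n) hms.1 hms.2
  obtain ⟨ms₀, hms₀⟩ := exists_feasible hS C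
  exact ⟨hcount, le_csInf ⟨_, ms₀, hms₀, rfl⟩ fun _ ⟨ms, hms, hn⟩ => hn ▸ hcount ms hms⟩

/-- Property 3: if every stack holds at least `k` blocks, the
minimum-label (target) block `t` is not in the top `k` layers `𝔅³`, and every
badly placed block of `𝔅³` has a label strictly greater than the minimum label
remaining in stack `s` after deleting its topmost `k-1` blocks (for every `s`),
then every feasible move sequence contains at least `k` non-BG relocations of
blocks of `𝔅³`; that is, `f_nonBG(𝔅³) ≥ k`. -/
theorem brp_property3 {B S : ℕ} (hS : 2 ≤ S) (hB : 1 ≤ B)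
    (C : Config B S) (hC : IsConfig C)
    (k : ℕ) (hk : ∀ s, k ≤ (C s).length)
    (t : Fin B) (ht : ∀ b, t ≤ b) (htout : t ∉ TopK C k)
    (hcond : ∀ b ∈ TopK C k, BadlyPlaced C b →
      ∀ s : Fin S, ∃ a ∈ (C s).take ((C s).length - (k - 1)), a < b) :
    (∀ ms, Feasible C ms → k ≤ countMoves (RelocNonBGIn (TopK C k)) C ms) ∧
    k ≤ fNonBG C (TopK C k) :=
  brp_property3_general hS C hC k t ht htout hcond
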